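/- arXiv:1210.5001 — 2 statements merged into one kernel-verified Lean document; each statement's English description precedes it below -/
import Mathlib

section
/- Let g : ℤ_p → ℤ_p be 1-Lipschitz with van der Put coefficients B̃_m and let f = Δg, where Δg(x) = g(x+1) − g(x), with van der Put coefficients B_m. Then: B_m = B̃_{m+1} − B̃_m for 0 ≤ m ≤ p−2; B_{p−1} = B̃_p + B̃_0 − B̃_{p−1}; for p^{n−1} ≤ m ≤ p^n − 1 (n ≥ 2), B_m = B̃_{m+1} − B̃_m if m ≠ p^{n−1} − 1 + m_{n−1}p^{n−1}, and B_m = B̃_{m+1} − B̃_m − B̃_{p^{n−1}} if m = p^{n−1} − 1 + m_{n−1}p^{n−1} with 1 ≤ m_{n−1} ≤ p−1. -/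
open MeasureTheory Finset

namespace VDP

noncomputable instance (p : ℕ) [Fact p.Prime] : MeasurableSpace ℤ_[p] := borel _
instance (p : ℕ) [Fact p.Prime] : BorelSpace ℤ_[p] := ⟨rfl⟩

/-- The Haar probability measure on `ℤ_[p]`. -/
noncomputable def haarZp (p : ℕ) [Fact p.Prime] : Measure ℤ_[p] :=
  Measure.addHaarMeasure ⊤

/-- `f` is 1-Lipschitz. -/
def IsLip (p : ℕ) [Fact p.Prime] (f : ℤ_[p] → ℤ_[p]) : Prop :=
  ∀ x y : ℤ_[p], ‖f x - f y‖ ≤ ‖x - y‖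

/-- The van der Put basis function `χ(m, x)` on `ℤ_[p]` (with `⌊log_p 0⌋ = 0`). -/
noncomputable def chi (p : ℕ) [Fact p.Prime] (m : ℕ) (x : ℤ_[p]) : ℤ_[p] :=
  if ‖x - (m : ℤ_[p])‖ ≤ ((p : ℝ) ^ (Nat.log p m + 1))⁻¹ then 1 else 0

/-- `q(m) = m_s p^s`, the leading term of the `p`-adic expansion of `m`. -/
def q (p m : ℕ) : ℕ := m / p ^ Nat.log p m * p ^ Nat.log p m

/-- `f` has van der Put expansion with coefficients `B`. -/
def vdpExpansion (p : ℕ) [Fact p.Prime] (f : ℤ_[p] → ℤ_[p]) (B : ℕ → ℤ_[p]) : Prop :=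
  ∀ x, f x = ∑' m, B m * chi p m x

/-- `f` is bijective modulo `p^n`. -/
def BijModPow (p : ℕ) [Fact p.Prime] (f : ℤ_[p] → ℤ_[p]) (n : ℕ) : Prop :=
  Function.Bijective fun a : ZMod (p ^ n) => PadicInt.toZModPow n (f ((a.val : ℕ) : ℤ_[p]))

/-- `f` is transitive modulo `p^n`. -/
def TransModPow (p : ℕ) [Fact p.Prime] (f : ℤ_[p] → ℤ_[p]) (n : ℕ) : Prop :=
  ∀ x : ℤ_[p], ∀ a : ZMod (p ^ n), ∃ k : ℕ, PadicInt.toZModPow n (f^[k] x) = a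

/-- The `i`-th digit of the canonical `p`-adic expansion of `x`. -/
noncomputable def digit (p : ℕ) [Fact p.Prime] (x : ℤ_[p]) (i : ℕ) : ℕ :=
  x.appr (i + 1) / p ^ i % p

end VDP

/-!
At a natural number `k` the van der Put series is a finite sum, and comparing the sums at `m`
and at `m - q(m) = m % p ^ ⌊log_p m⌋` gives `B_m = f(m) - f(m - q(m))` for `m ≥ p` and
`B_m = f(m)` for `m < p`. Applied to `g` and to `Δg`, the identities reduce to comparing the
reductions of `m` and `m + 1`: adding one to `m` adds one to `m % p ^ (n - 1)`, unless that
residue is `p ^ (n - 1) - 1`, in which case the carry makes `m + 1` a multiple of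
`p ^ (n - 1)` and the extra term `B̃_{p^(n-1)} = g(p ^ (n - 1)) - g(0)` appears.
-/

theorem Nat.add_one_mod_of_mod_ne {m n : ℕ} (hn : 0 < n) (h : m % n ≠ n - 1) :
    (m + 1) % n = m % n + 1 := by
  have := Nat.mod_lt m hn
  rw [← Nat.mod_add_mod, Nat.mod_eq_of_lt (by omega)]

theorem Nat.add_one_mod_of_mod_eq {m n : ℕ} (hn : 0 < n) (h : m % n = n - 1) :
    (m + 1) % n = 0 := by
  rw [← Nat.mod_add_mod, h, Nat.sub_add_cancel hn, Nat.mod_self]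

namespace VDP

variable {p : ℕ} [hp : Fact p.Prime]

theorem chi_natCast (m k : ℕ) :
    chi p m (k : ℤ_[p]) = if m ≡ k [MOD p ^ (Nat.log p m + 1)] then 1 else 0 := by
  have hsub : (k : ℤ_[p]) - m = ((k - m : ℤ) : ℤ_[p]) := by push_cast; ring
  have hrad : ((p : ℝ) ^ (Nat.log p m + 1))⁻¹ = (p : ℝ) ^ (-(Nat.log p m + 1 : ℕ) : ℤ) := by
    rw [zpow_neg, zpow_natCast]
  refine if_congr ?_ rfl rfl
  rw [hsub, hrad, PadicInt.norm_int_le_pow_iff_dvd, Nat.modEq_iff_dvd]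
  push_cast
  rfl

theorem chi_natCast_self (m : ℕ) : chi p m (m : ℤ_[p]) = 1 := by
  rw [chi_natCast, if_pos Nat.ModEq.rfl]

theorem chi_natCast_eq_zero {m k : ℕ} (hne : k ≠ m) (hk : k < p ^ (Nat.log p m + 1)) :
    chi p m (k : ℤ_[p]) = 0 := by
  rw [chi_natCast, if_neg]
  exact fun h => hne (h.eq_of_lt_of_lt (Nat.lt_pow_succ_log_self hp.out.one_lt m) hk).symm

theorem chi_natCast_eq_zero_of_lt {m k : ℕ} (h : k < m) : chi p m (k : ℤ_[p]) = 0 :=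
  chi_natCast_eq_zero h.ne (h.trans (Nat.lt_pow_succ_log_self hp.out.one_lt m))

theorem chi_natCast_congr {m k k' : ℕ} (h : k ≡ k' [MOD p ^ (Nat.log p m + 1)]) :
    chi p m (k : ℤ_[p]) = chi p m (k' : ℤ_[p]) := by
  simp only [chi_natCast]
  exact if_congr ⟨fun hk => hk.trans h, fun hk' => hk'.trans h.symm⟩ rfl rfl

namespace vdpExpansion

variable {f : ℤ_[p] → ℤ_[p]} {B : ℕ → ℤ_[p]}

theorem apply_natCast_eq_sum (h : vdpExpansion p f B) {k N : ℕ} (hk : k < N) :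
    f k = ∑ m ∈ range N, B m * chi p m (k : ℤ_[p]) := by
  rw [h]
  refine tsum_eq_sum fun m hm => ?_
  rw [chi_natCast_eq_zero_of_lt (hk.trans_le (by simpa using hm)), mul_zero]

theorem coeff_of_lt (h : vdpExpansion p f B) {m : ℕ} (hm : m < p) : B m = f m := by
  rw [h.apply_natCast_eq_sum (Nat.lt_succ_self m), sum_range_succ, chi_natCast_self, mul_one,
    right_eq_add]
  refine sum_eq_zero fun b hb => ?_
  have hlog : Nat.log p b = 0 := Nat.log_of_lt ((mem_range.1 hb).trans hm)
  rw [chi_natCast_eq_zero (mem_range.1 hb).ne' (by rwa [hlog, zero_add, pow_one]), mul_zero]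

theorem coeff_of_le (h : vdpExpansion p f B) {m : ℕ} (hm : p ≤ m) :
    B m = f m - f (m % p ^ Nat.log p m : ℕ) := by
  set L := Nat.log p m
  set r := m % p ^ L
  have hpL : 0 < p ^ L := pow_pos hp.out.pos L
  have hL : 1 ≤ L := Nat.log_pos hp.out.one_lt hm
  have hrm : r < m :=
    (Nat.mod_lt _ hpL).trans_le (Nat.pow_log_le_self p (hp.out.pos.trans_le hm).ne')
  rw [h.apply_natCast_eq_sum (Nat.lt_succ_self m),
    h.apply_natCast_eq_sum (hrm.trans (Nat.lt_succ_self m)), sum_range_succ, sum_range_succ,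
    chi_natCast_self, chi_natCast_eq_zero_of_lt hrm, mul_one, mul_zero, add_zero, add_sub_right_comm, right_eq_add, ← sum_sub_distrib]
  refine sum_eq_zero fun b hbm => ?_
  rw [← mul_sub, mul_eq_zero_of_right]
  rcases lt_or_ge (Nat.log p b) L with hbL | hbL
  · -- `r ≡ m` modulo `p ^ L`, which is divisible by the modulus of `χ(b, ·)`.
    rw [sub_eq_zero, chi_natCast_congr ((Nat.mod_modEq m _).symm.of_dvd (pow_dvd_pow p hbL))]
  · have hb : p ^ L ≤ b := Nat.pow_le_of_le_log (by rintro rfl; simp at hbL; omega) hbL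
    have hmb : m < p ^ (Nat.log p b + 1) := (Nat.lt_pow_succ_log_self hp.out.one_lt m).trans_le
      (Nat.pow_le_pow_right hp.out.pos (by omega))
    rw [chi_natCast_eq_zero_of_lt ((Nat.mod_lt _ hpL).trans_le hb),
      chi_natCast_eq_zero (mem_range.1 hbm).ne' hmb, sub_zero]

theorem coeff_pow (h : vdpExpansion p f B) {k : ℕ} (hk : k ≠ 0) :
    B (p ^ k) = f (p ^ k : ℕ) - f 0 := by
  rw [h.coeff_of_le (Nat.le_self_pow hk p), Nat.log_pow hp.out.one_lt, Nat.mod_self, Nat.cast_zero]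

end vdpExpansion

section fwdDiff

variable {g : ℤ_[p] → ℤ_[p]} {Bt B : ℕ → ℤ_[p]} (hBt : vdpExpansion p g Bt)
  (hB : vdpExpansion p (fun x => g (x + 1) - g x) B)
include hB

theorem coeff_fwdDiff_of_lt {m : ℕ} (hm : m < p) : B m = g (m + 1) - g m :=
  hB.coeff_of_lt hm

theorem coeff_fwdDiff_of_le {m : ℕ} (hm : p ≤ m) :
    B m = (g (m + 1) - g m) -
      (g ((m % p ^ Nat.log p m : ℕ) + 1) - g (m % p ^ Nat.log p m : ℕ)) :=
  hB.coeff_of_le hm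

include hBt

theorem coeff_fwdDiff_of_add_one_lt {m : ℕ} (hm : m + 1 < p) : B m = Bt (m + 1) - Bt m := by
  rw [coeff_fwdDiff_of_lt hB (by omega), hBt.coeff_of_lt hm, hBt.coeff_of_lt (by omega),
    Nat.cast_succ]

theorem coeff_fwdDiff_pred : B (p - 1) = Bt p + Bt 0 - Bt (p - 1) := by
  have hp1 := hp.out.one_lt
  have hBtp := hBt.coeff_pow one_ne_zero
  rw [pow_one] at hBtp
  rw [coeff_fwdDiff_of_lt hB (by omega), hBtp, hBt.coeff_of_lt hp.out.pos,
    hBt.coeff_of_lt (by omega), ← Nat.cast_add_one, Nat.sub_add_cancel hp1.le, Nat.cast_zero]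
  abel

theorem coeff_fwdDiff_of_mod_ne {k m : ℕ} (hk : k ≠ 0) (hkm : p ^ k ≤ m) (hmk : m < p ^ (k + 1))
    (hmod : m % p ^ k ≠ p ^ k - 1) : B m = Bt (m + 1) - Bt m := by
  have hpk : 0 < p ^ k := pow_pos hp.out.pos k
  have hpm : p ≤ m := (Nat.le_self_pow hk p).trans hkm
  have hsucc := Nat.add_one_mod_of_mod_ne hpk hmod
  -- otherwise `m + 1 = p ^ (k + 1)`, which is divisible by `p ^ k`
  have hmk' : m + 1 < p ^ (k + 1) := by
    refine lt_of_le_of_ne hmk fun heq => ?_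
    rw [heq, Nat.mod_eq_zero_of_dvd (pow_dvd_pow p k.le_succ)] at hsucc
    exact Nat.succ_ne_zero _ hsucc.symm
  rw [coeff_fwdDiff_of_le hB hpm, hBt.coeff_of_le (by omega), hBt.coeff_of_le hpm,
    Nat.log_eq_of_pow_le_of_lt_pow hkm hmk, Nat.log_eq_of_pow_le_of_lt_pow (by omega) hmk', hsucc]
  push_cast
  abel

theorem coeff_fwdDiff_of_mod_eq {k m : ℕ} (hk : k ≠ 0) (hkm : p ^ k ≤ m) (hmk : m < p ^ (k + 1))
    (hmod : m % p ^ k = p ^ k - 1) : B m = Bt (m + 1) - Bt m - Bt (p ^ k) := by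
  have hpk : 0 < p ^ k := pow_pos hp.out.pos k
  have hpm : p ≤ m := (Nat.le_self_pow hk p).trans hkm
  have hsucc : Bt (m + 1) = g (m + 1 : ℕ) - g 0 := by
    rcases (show m + 1 ≤ p ^ (k + 1) from hmk).lt_or_eq with hlt | heq
    · rw [hBt.coeff_of_le (by omega), Nat.log_eq_of_pow_le_of_lt_pow (by omega) hlt,
        Nat.add_one_mod_of_mod_eq hpk hmod, Nat.cast_zero]
    · rw [heq, hBt.coeff_pow (Nat.succ_ne_zero k)]
  rw [coeff_fwdDiff_of_le hB hpm, hsucc, hBt.coeff_of_le hpm, hBt.coeff_pow hk,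
    Nat.log_eq_of_pow_le_of_lt_pow hkm hmk, hmod, ← Nat.cast_add_one (p ^ k - 1),
    Nat.sub_add_cancel (show 1 ≤ p ^ k from hpk)]
  push_cast
  abel

end fwdDiff

end VDP

open VDP in
theorem stmt9_general (p : ℕ) [Fact p.Prime] (g : ℤ_[p] → ℤ_[p]) (Bt B : ℕ → ℤ_[p])
    (hBt : vdpExpansion p g Bt)
    (hB : vdpExpansion p (fun x => g (x + 1) - g x) B) :
    (∀ m : ℕ, m ≤ p - 2 → B m = Bt (m + 1) - Bt m) ∧
      B (p - 1) = Bt p + Bt 0 - Bt (p - 1) ∧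
      (∀ n : ℕ, 2 ≤ n → ∀ m : ℕ, p ^ (n - 1) ≤ m → m ≤ p ^ n - 1 →
        (m % p ^ (n - 1) ≠ p ^ (n - 1) - 1 → B m = Bt (m + 1) - Bt m) ∧
          (m % p ^ (n - 1) = p ^ (n - 1) - 1 →
            B m = Bt (m + 1) - Bt m - Bt (p ^ (n - 1)))) := by
  have hp : p.Prime := Fact.out
  refine ⟨fun m hm => coeff_fwdDiff_of_add_one_lt hBt hB (by have := hp.two_le; omega),
    coeff_fwdDiff_pred hBt hB, fun n hn m hnm hmn => ?_⟩
  obtain ⟨k, rfl⟩ : ∃ k, n = k + 1 := ⟨n - 1, by omega⟩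
  have hmk : m < p ^ (k + 1) := Nat.lt_of_le_sub_one (pow_pos hp.pos _) hmn
  rw [Nat.add_sub_cancel] at hnm ⊢
  exact ⟨coeff_fwdDiff_of_mod_ne hBt hB (by omega) hnm hmk,
    coeff_fwdDiff_of_mod_eq hBt hB (by omega) hnm hmk⟩

open VDP in
theorem stmt9 (p : ℕ) [Fact p.Prime] (g : ℤ_[p] → ℤ_[p]) (Bt B : ℕ → ℤ_[p])
    (hg : IsLip p g) (hBt : vdpExpansion p g Bt)
    (hB : vdpExpansion p (fun x => g (x + 1) - g x) B) :
    (∀ m : ℕ, m ≤ p - 2 → B m = Bt (m + 1) - Bt m) ∧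
      B (p - 1) = Bt p + Bt 0 - Bt (p - 1) ∧
      (∀ n : ℕ, 2 ≤ n → ∀ m : ℕ, p ^ (n - 1) ≤ m → m ≤ p ^ n - 1 →
        (m % p ^ (n - 1) ≠ p ^ (n - 1) - 1 → B m = Bt (m + 1) - Bt m) ∧
          (m % p ^ (n - 1) = p ^ (n - 1) - 1 →
            B m = Bt (m + 1) - Bt m - Bt (p ^ (n - 1)))) :=
  stmt9_general p g Bt B hBt hB
end

section
/- Let f : ℤ_2 → ℤ_2 be a measure-preserving 1-Lipschitz function that is transitive modulo 2^n for some n ≥ 1. Then f is transitive modulo 2^{n+1} if and only if S_n := Σ_{m=0}^{2^n−1} f_{mn} is odd, where f_{mn} denotes the n-th binary digit of f(m). -/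
open MeasureTheory Finset

/-!
Reduction modulo `2^k` turns `f` into maps `G_k` on `ℤ/2^k` compatible with the reductions
`ℤ/2^(k+1) → ℤ/2^k`; they are bijective because a missed residue class would be a nonempty open
set with null preimage. Compatibility and injectivity of `G = G_(n+1)` force
`G (z + 2^n) = G z + 2^n`, so the top bit of `G z` is that of `z` plus a carry depending only on
`z mod 2^n`, namely the `n`-th digit of `f` at the least lift of `z mod 2^n`. Summing the carries
along the `2^n`-cycle of `G_n` through `0`, the top bit of `G^[2^n] 0 ∈ {0, 2^n}` is `S_n mod 2`,
and `G` is a single cycle exactly when `G^[2^n] 0 = 2^n`.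
-/

namespace VDP

open Function Finset PadicInt

def IsTransitive {α : Type*} (F : α → α) : Prop :=
  ∀ a b, ∃ k, F^[k] a = b

section Dynamics

variable {α : Type*} {F : α → α}

theorem IsTransitive.mem_periodicPts (hF : IsTransitive F) (x : α) : x ∈ periodicPts F := by
  obtain ⟨k, hk⟩ := hF (F x) x
  exact ⟨k + 1, k.succ_pos, by rw [IsPeriodicPt, IsFixedPt, iterate_succ_apply, hk]⟩

theorem IsTransitive.bijective_iterate (hF : IsTransitive F) (x : α) :
    Bijective fun j : Fin (minimalPeriod F x) => F^[j] x := by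
  refine ⟨fun i j hij => Fin.ext (iterate_injOn_Iio_minimalPeriod i.isLt j.isLt hij), fun b => ?_⟩
  obtain ⟨k, rfl⟩ := hF x b
  have hP := minimalPeriod_pos_of_mem_periodicPts (hF.mem_periodicPts x)
  exact ⟨⟨k % minimalPeriod F x, Nat.mod_lt _ hP⟩, iterate_mod_minimalPeriod_eq⟩

theorem IsTransitive.minimalPeriod_eq_card [Fintype α] (hF : IsTransitive F) (x : α) :
    minimalPeriod F x = Fintype.card α :=
  calc minimalPeriod F x = Fintype.card (Fin (minimalPeriod F x)) := (Fintype.card_fin _).symm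
    _ = Fintype.card α := Fintype.card_of_bijective (hF.bijective_iterate x)

theorem IsTransitive.isPeriodicPt_card [Fintype α] (hF : IsTransitive F) (x : α) :
    IsPeriodicPt F (Fintype.card α) x :=
  hF.minimalPeriod_eq_card x ▸ isPeriodicPt_minimalPeriod F x

theorem IsTransitive.sum_range_card_iterate [Fintype α] {M : Type*} [AddCommMonoid M]
    (hF : IsTransitive F) (g : α → M) (x : α) :
    ∑ j ∈ range (Fintype.card α), g (F^[j] x) = ∑ y, g y := by
  rw [← hF.minimalPeriod_eq_card x, ← Fin.sum_univ_eq_sum_range (fun j => g (F^[j] x))]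
  exact (hF.bijective_iterate x).sum_comp g

theorem IsTransitive.not_isPeriodicPt [Fintype α] (hF : IsTransitive F) {P : ℕ} (hP : 0 < P)
    (hlt : P < Fintype.card α) (x : α) : ¬IsPeriodicPt F P x := fun hx =>
  (hx.minimalPeriod_le hP).not_gt (hF.minimalPeriod_eq_card x ▸ hlt)

theorem isTransitive_of_isPeriodicPt {P : ℕ} {x : α} (hP : 0 < P) (hx : IsPeriodicPt F P x)
    (h : ∀ b, ∃ k, F^[k] x = b) : IsTransitive F := by
  intro a b
  obtain ⟨i, rfl⟩ := h a
  obtain ⟨j, rfl⟩ := h b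
  refine ⟨(P - 1) * i + j, ?_⟩
  rw [← iterate_add_apply, show (P - 1) * i + j + i = j + P * i by
      rw [Nat.sub_one_mul]; have := Nat.le_mul_of_pos_left i hP; omega,
    iterate_add_apply, (hx.mul_const i).eq]

theorem sum_range_natCast_eq_sum {M : Type*} [AddCommMonoid M] (k : ℕ) [NeZero k]
    (g : ZMod k → M) : ∑ m ∈ range k, g m = ∑ y, g y :=
  sum_nbij' Nat.cast ZMod.val (fun _ _ => mem_univ _) (fun y _ => mem_range.mpr (ZMod.val_lt y))
    (fun _ hm => ZMod.val_cast_of_lt (mem_range.mp hm)) (fun y _ => ZMod.natCast_zmod_val y)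
    fun _ _ => rfl

end Dynamics

section InducedMap

variable {p : ℕ} [Fact p.Prime]

noncomputable def inducedMap (f : ℤ_[p] → ℤ_[p]) (k : ℕ) : ZMod (p ^ k) → ZMod (p ^ k) :=
  fun a => toZModPow k (f (a.val : ℤ_[p]))

theorem toZModPow_eq_toZModPow_iff {k : ℕ} {x y : ℤ_[p]} :
    toZModPow k x = toZModPow k y ↔ ‖x - y‖ ≤ (p : ℝ) ^ (-k : ℤ) := by
  rw [← sub_eq_zero, ← map_sub, ← RingHom.mem_ker, ker_toZModPow, norm_le_pow_iff_mem_span_pow]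

theorem toZModPow_natCast_val {k : ℕ} (a : ZMod (p ^ k)) : toZModPow k (a.val : ℤ_[p]) = a := by
  rw [map_natCast, ZMod.natCast_zmod_val]

variable {f : ℤ_[p] → ℤ_[p]}

theorem IsLip.semiconj_toZModPow (hf : IsLip p f) (k : ℕ) :
    Semiconj (toZModPow k) f (inducedMap f k) := fun x => by
  refine toZModPow_eq_toZModPow_iff.mpr ((hf _ _).trans (toZModPow_eq_toZModPow_iff.mp ?_))
  exact (toZModPow_natCast_val _).symm

theorem IsLip.transModPow_iff (hf : IsLip p f) (k : ℕ) :
    TransModPow p f k ↔ IsTransitive (inducedMap f k) := by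
  simp only [TransModPow, IsTransitive, ((hf.semiconj_toZModPow k).iterate_right _).eq]
  exact ⟨fun h a => by simpa only [toZModPow_natCast_val] using h (a.val : ℤ_[p]),
    fun h x => h _⟩

theorem IsLip.semiconj_castHom (hf : IsLip p f) {k m : ℕ} (h : k ≤ m) :
    Semiconj (ZMod.castHom (pow_dvd_pow p h) (ZMod (p ^ k))) (inducedMap f m) (inducedMap f k) := by
  intro z
  rw [← toZModPow_natCast_val z, ← (hf.semiconj_toZModPow m).eq, ZMod.castHom_apply,
    ZMod.castHom_apply, cast_toZModPow _ _ h, cast_toZModPow _ _ h, (hf.semiconj_toZModPow k).eq]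

instance : (haarZp p).IsAddHaarMeasure := by
  unfold haarZp; infer_instance

theorem isOpen_preimage_toZModPow (k : ℕ) (a : ZMod (p ^ k)) :
    IsOpen (toZModPow k ⁻¹' {a}) := by
  have : toZModPow k ⁻¹' {a} = Metric.closedBall (a.val : ℤ_[p]) ((p : ℝ) ^ (-k : ℤ)) := by
    ext x
    rw [Set.mem_preimage, Set.mem_singleton_iff, ← toZModPow_natCast_val a,
      toZModPow_eq_toZModPow_iff, toZModPow_natCast_val, Metric.mem_closedBall, dist_eq_norm]
  rw [this]
  exact IsUltrametricDist.isOpen_closedBall _ (zpow_pos (mod_cast (Fact.out : p.Prime).pos) _).ne'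

theorem IsLip.bijModPow_of_measurePreserving (hf : IsLip p f)
    (hmp : MeasurePreserving f (haarZp p) (haarZp p)) (k : ℕ) : BijModPow p f k := by
  refine Surjective.bijective_of_finite fun a => ?_
  by_contra! hne
  have hempty : f ⁻¹' (toZModPow k ⁻¹' {a}) = ∅ := by
    ext x
    simpa [(hf.semiconj_toZModPow k).eq] using hne (toZModPow k x)
  have hopen := isOpen_preimage_toZModPow k a
  have hpos := hopen.measure_pos (haarZp p) ⟨_, toZModPow_natCast_val a⟩
  rw [← hmp.measure_preimage hopen.measurableSet.nullMeasurableSet, hempty, measure_empty] at hpos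
  exact hpos.false

end InducedMap

section TopBit

variable {n : ℕ}

abbrev reduce (n : ℕ) : ZMod (2 ^ (n + 1)) →+* ZMod (2 ^ n) :=
  ZMod.castHom (pow_dvd_pow 2 n.le_succ) (ZMod (2 ^ n))

def topBit (n : ℕ) (z : ZMod (2 ^ (n + 1))) : ZMod 2 := (z.val / 2 ^ n : ℕ)

theorem val_two_pow : ((2 : ZMod (2 ^ (n + 1))) ^ n).val = 2 ^ n := by
  simpa using ZMod.val_natCast_of_lt (n := 2 ^ (n + 1)) (Nat.pow_lt_pow_succ one_lt_two (n := n))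

theorem two_pow_ne_zero : (2 : ZMod (2 ^ (n + 1))) ^ n ≠ 0 := fun h => by
  simpa [h] using (Nat.two_pow_pos n).trans_eq val_two_pow.symm

theorem two_pow_eq_zero : (2 : ZMod (2 ^ n)) ^ n = 0 := by
  exact_mod_cast ZMod.natCast_self (2 ^ n)

theorem two_pow_add_two_pow : (2 : ZMod (2 ^ (n + 1))) ^ n + 2 ^ n = 0 := by
  rw [← two_mul, ← pow_succ', two_pow_eq_zero]

theorem dvd_val_iff {z : ZMod (2 ^ (n + 1))} : 2 ^ n ∣ z.val ↔ z = 0 ∨ z = 2 ^ n := by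
  rw [← ZMod.val_eq_zero, ← (ZMod.val_injective _).eq_iff, val_two_pow]
  constructor
  · rintro ⟨c, hc⟩
    have hlt : 2 ^ n * c < 2 ^ n * 2 := hc ▸ pow_succ 2 n ▸ ZMod.val_lt z
    have hc2 : c < 2 := Nat.lt_of_mul_lt_mul_left hlt
    interval_cases c <;> simp [hc]
  · rintro (h | h) <;> simp [h]

theorem reduce_eq_reduce_iff {z w : ZMod (2 ^ (n + 1))} :
    reduce n z = reduce n w ↔ w = z ∨ w = z + 2 ^ n := by
  rw [eq_comm, ← sub_eq_zero, ← map_sub, ZMod.castHom_apply, ← ZMod.natCast_val,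
    ZMod.natCast_eq_zero_iff, dvd_val_iff, sub_eq_zero, sub_eq_iff_eq_add']

theorem topBit_natCast (m : ℕ) : topBit n (m : ZMod (2 ^ (n + 1))) = (m / 2 ^ n : ℕ) := by
  rw [topBit, ZMod.val_natCast, pow_succ, Nat.mod_mul_right_div_self, ZMod.natCast_mod]

theorem topBit_zero : topBit n 0 = 0 := by
  simpa using topBit_natCast (n := n) 0

theorem topBit_two_pow : topBit n (2 ^ n) = 1 := by
  simpa [Nat.div_self (Nat.two_pow_pos n)] using topBit_natCast (n := n) (2 ^ n)

theorem topBit_add_two_pow (z : ZMod (2 ^ (n + 1))) : topBit n (z + 2 ^ n) = topBit n z + 1 := by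
  have := topBit_natCast (n := n) (z.val + 2 ^ n)
  push_cast [ZMod.natCast_zmod_val, Nat.add_div_right _ (Nat.two_pow_pos n)] at this
  rw [this, topBit]

theorem reduce_natCast_val (y : ZMod (2 ^ n)) : reduce n (y.val : ZMod (2 ^ (n + 1))) = y := by
  rw [map_natCast, ZMod.natCast_zmod_val]

theorem topBit_natCast_val (y : ZMod (2 ^ n)) : topBit n (y.val : ZMod (2 ^ (n + 1))) = 0 := by
  rw [topBit_natCast, Nat.div_eq_of_lt (ZMod.val_lt y), Nat.cast_zero]

end TopBit

section CycleLift

variable {n : ℕ} {G : ZMod (2 ^ (n + 1)) → ZMod (2 ^ (n + 1))} {F : ZMod (2 ^ n) → ZMod (2 ^ n)}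

/-- For `G = inducedMap f (n + 1)` and `y = m < 2^n` this is the paper's digit `f_{mn}`. -/
def carry (G : ZMod (2 ^ (n + 1)) → ZMod (2 ^ (n + 1))) (y : ZMod (2 ^ n)) : ZMod 2 :=
  topBit n (G y.val)

theorem commute_add_two_pow (hGF : Semiconj (reduce n) G F) (hG : Injective G) :
    Function.Commute G (· + 2 ^ n) := fun z => by
  have hred : reduce n (G z) = reduce n (G (z + 2 ^ n)) := by
    rw [hGF.eq, hGF.eq, map_add, map_pow, map_ofNat, two_pow_eq_zero, add_zero]
  rcases reduce_eq_reduce_iff.mp hred with h | h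
  · exact absurd (hG h) (by simpa using two_pow_ne_zero)
  · exact h

theorem topBit_apply (hGF : Semiconj (reduce n) G F) (hG : Injective G) (z : ZMod (2 ^ (n + 1))) :
    topBit n (G z) = topBit n z + carry G (reduce n z) := by
  set y := reduce n z
  rcases reduce_eq_reduce_iff.mp (reduce_natCast_val y) with h | h
  · rw [h, topBit_natCast_val, zero_add, carry]
  · rw [h, commute_add_two_pow hGF hG, topBit_add_two_pow, topBit_add_two_pow,
      topBit_natCast_val, carry]
    ring

theorem topBit_iterate_zero (hGF : Semiconj (reduce n) G F) (hG : Injective G) (k : ℕ) :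
    topBit n (G^[k] 0) = ∑ j ∈ range k, carry G (F^[j] 0) := by
  induction k with
  | zero => exact topBit_zero
  | succ k ih =>
    rw [iterate_succ_apply', topBit_apply hGF hG, ih, (hGF.iterate_right k).eq, map_zero,
      sum_range_succ]

variable (hGF : Semiconj (reduce n) G F) (hG : Injective G) (hF : IsTransitive F)
include hGF hF

theorem iterate_two_pow_zero_eq_or : G^[2 ^ n] 0 = 0 ∨ G^[2 ^ n] 0 = 2 ^ n := by
  have hper := hF.isPeriodicPt_card 0
  rw [ZMod.card] at hper
  have := reduce_eq_reduce_iff.mp (show reduce n 0 = reduce n (G^[2 ^ n] 0) by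
    rw [(hGF.iterate_right _).eq, map_zero, hper.eq])
  simpa using this

include hG

theorem topBit_iterate_two_pow_zero : topBit n (G^[2 ^ n] 0) = ∑ y, carry G y := by
  have := hF.sum_range_card_iterate (carry G) 0
  rw [ZMod.card] at this
  rw [topBit_iterate_zero hGF hG, this]

theorem isTransitive_of_iterate_two_pow_zero (hN : G^[2 ^ n] 0 = 2 ^ n) : IsTransitive G := by
  have hshift (k : ℕ) : G^[k] (2 ^ n) = G^[k] 0 + 2 ^ n := by
    simpa using (commute_add_two_pow hGF hG).iterate_left k 0
  refine isTransitive_of_isPeriodicPt (P := 2 ^ n + 2 ^ n) (x := 0) (by positivity) ?_ fun b => ?_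
  · rw [IsPeriodicPt, IsFixedPt, iterate_add_apply, hN, hshift, hN, two_pow_add_two_pow]
  · obtain ⟨j, hj⟩ := hF 0 (reduce n b)
    rcases reduce_eq_reduce_iff.mp (show reduce n (G^[j] 0) = reduce n b by
      rw [(hGF.iterate_right j).eq, map_zero, hj]) with h | h
    · exact ⟨j, h.symm⟩
    · exact ⟨j + 2 ^ n, by rw [iterate_add_apply, hN, hshift, h]⟩

theorem isTransitive_iff_sum_carry : IsTransitive G ↔ ∑ y, carry G y = 1 := by
  rw [← topBit_iterate_two_pow_zero hGF hG hF]
  rcases iterate_two_pow_zero_eq_or hGF hF with h | h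
  · refine iff_of_false (fun hGt => ?_) (by simp [h, topBit_zero])
    refine hGt.not_isPeriodicPt (Nat.two_pow_pos n) ?_ 0 h
    simpa using Nat.pow_lt_pow_succ one_lt_two
  · simpa [h, topBit_two_pow] using isTransitive_of_iterate_two_pow_zero hGF hG hF h

end CycleLift

section Digits

theorem topBit_toZModPow {n : ℕ} (x : ℤ_[2]) : topBit n (toZModPow (n + 1) x) = digit 2 x n := by
  change topBit n ((x.appr (n + 1) : ℕ) : ZMod _) = _
  rw [topBit_natCast, digit, ZMod.natCast_mod]

theorem IsLip.carry_inducedMap_natCast {f : ℤ_[2] → ℤ_[2]} (hf : IsLip 2 f) {n m : ℕ}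
    (hm : m < 2 ^ n) : carry (inducedMap f (n + 1)) (m : ZMod (2 ^ n)) = digit 2 (f m) n := by
  rw [carry, ZMod.val_cast_of_lt hm, ← map_natCast (toZModPow (n + 1)),
    ← (hf.semiconj_toZModPow _).eq, topBit_toZModPow]

end Digits

end VDP

open VDP MeasureTheory Finset in
theorem stmt15_general (f : ℤ_[2] → ℤ_[2]) (hf : IsLip 2 f)
    (hmp : MeasurePreserving f (haarZp 2) (haarZp 2))
    (n : ℕ) (ht : TransModPow 2 f n) :
    TransModPow 2 f (n + 1) ↔
      Odd (∑ m ∈ Finset.range (2 ^ n), digit 2 (f (m : ℤ_[2])) n) := by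
  have hGF : Function.Semiconj (reduce n) (inducedMap f (n + 1)) (inducedMap f n) :=
    hf.semiconj_castHom n.le_succ
  rw [hf.transModPow_iff] at ht ⊢
  rw [isTransitive_iff_sum_carry hGF (hf.bijModPow_of_measurePreserving hmp (n + 1)).injective ht,
    ← ZMod.natCast_eq_one_iff_odd, Nat.cast_sum, ← sum_range_natCast_eq_sum,
    sum_congr rfl fun m hm => hf.carry_inducedMap_natCast (mem_range.mp hm)]

open VDP MeasureTheory Finset in
theorem stmt15 (f : ℤ_[2] → ℤ_[2]) (hf : IsLip 2 f)
    (hmp : MeasurePreserving f (haarZp 2) (haarZp 2))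
    (n : ℕ) (hn : 1 ≤ n) (ht : TransModPow 2 f n) :
    TransModPow 2 f (n + 1) ↔
      Odd (∑ m ∈ Finset.range (2 ^ n), digit 2 (f (m : ℤ_[2])) n) :=
  stmt15_general f hf hmp n ht
end
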